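/- arXiv:0903.1173 — 7 statements merged into one kernel-verified Lean document; each statement's English description precedes it below -/
import Mathlib

section
/- Let C be a small category with finite limits and let L be the full subcategory of the functor category C ⥤ Type spanned by the functors preserving finite limits (the left exact presheaves). Then the inclusion functor L ⥤ (C ⥤ Type) has a left adjoint (L is a reflective subcategory of the presheaf category). -/
/-!
A presheaf preserves the limit of a diagram `D` exactly when it is orthogonal to the comparison
map from the colimit of the representables at the `D j` to the representable at `lim D`.
Finite categories form, up to equivalence, a small family, so the left exact presheaves are the
objects orthogonal to a small set of maps between finitely presentable presheaves, and the
orthogonal-reflection construction in the locally presentable category of presheaves provides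
the left adjoint. A covariant functor on `C` is a presheaf on `Cᵒᵖ`.
-/

open CategoryTheory CategoryTheory.Limits Opposite

universe u

namespace CategoryTheory

instance Presheaf.isCardinalPresentable_shrinkYoneda_obj {C : Type u} [SmallCategory C]
    (κ : Cardinal.{u}) [Fact κ.IsRegular] (X : C) :
    IsCardinalPresentable (shrinkYoneda.{u}.obj X) κ where
  preservesColimitOfShape J _ _ := by
    let e : coyoneda.obj (op (shrinkYoneda.{u}.obj X)) ≅ (evaluation Cᵒᵖ (Type u)).obj (op X) :=
      NatIso.ofComponents (fun _ ↦ Equiv.toIso shrinkYonedaEquiv)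
        (fun _ ↦ by ext; simp [shrinkYonedaEquiv_comp])
    exact preservesColimitsOfShape_of_natIso e.symm

theorem Presheaf.isRightAdjoint_ι_iInf_preservesLimitsOfShape {C : Type u} [SmallCategory C]
    {ι : Type u} (J : ι → Type u) [∀ i, SmallCategory (J i)] (κ : Cardinal.{u})
    [Fact κ.IsRegular] (hJ : ∀ i, HasCardinalLT (Arrow (J i)) κ) :
    (⨅ i, ObjectProperty.preservesLimitsOfShape (J i) :
      ObjectProperty (Cᵒᵖ ⥤ Type u)).ι.IsRightAdjoint := by
  have isLocal_eq : (⨅ i, ObjectProperty.preservesLimitsOfShape (J i) :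
      ObjectProperty (Cᵒᵖ ⥤ Type u)) =
      (⨆ i, ⨆ F : J i ⥤ Cᵒᵖ, MorphismProperty.ofHoms (preservesLimitHomFamily F)).isLocal := by
    simp only [MorphismProperty.isLocal_iSup]
    congr 1
    funext i
    rw [preservesLimitsOfShape_eq_isLocal, MorphismProperty.isLocal_iSup]
  rw [isLocal_eq]
  apply MorphismProperty.isRightAdjoint_ι_isLocal _ κ
  rintro _ _ _ hf
  simp only [MorphismProperty.iSup_iff] at hf
  obtain ⟨i, F, ⟨_⟩⟩ := hf
  have (k : (J i)ᵒᵖ) : IsCardinalPresentable ((F.leftOp ⋙ shrinkYoneda).obj k) κ := by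
    dsimp; infer_instance
  exact ⟨isCardinalPresentable_of_isColimit _ (colimit.isColimit _) κ (by simpa using hJ i),
    inferInstance⟩

theorem ObjectProperty.isRightAdjoint_ι_of_equivalence {A B : Type*} [Category* A]
    [Category* B] (e : A ≌ B) {P : ObjectProperty A} {Q : ObjectProperty B}
    [Q.IsClosedUnderIsomorphisms] (h : Q.inverseImage e.functor = P) [Q.ι.IsRightAdjoint] :
    P.ι.IsRightAdjoint :=
  Functor.isRightAdjoint_of_iso (F := (e.congrFullSubcategory h).functor ⋙ Q.ι ⋙ e.inverse)
    (Functor.isoWhiskerLeft P.ι e.unitIso.symm ≪≫ P.ι.rightUnitor)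

theorem preservesFiniteLimits_comp_equivalence_iff {A B D : Type*} [Category* A] [Category* B]
    [Category* D] (e : A ≌ B) (F : B ⥤ D) :
    PreservesFiniteLimits (e.functor ⋙ F) ↔ PreservesFiniteLimits F :=
  ⟨fun _ ↦ preservesFiniteLimits_of_natIso (e.invFunIdAssoc F), fun _ ↦ inferInstance⟩

open SmallCategoryCardinalLT in
theorem ObjectProperty.preservesFiniteLimits_eq_iInf_preservesLimitsOfShape {A B : Type*}
    [Category* A] [Category* B] :
    (preservesFiniteLimits : ObjectProperty (A ⥤ B)) =
      ⨅ S : SmallCategoryCardinalLT Cardinal.aleph0.{0},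
        preservesLimitsOfShape (categoryFamily _ S) := by
  ext F
  simp only [preservesFiniteLimits_iff, iInf_apply, preservesLimitsOfShape_iff, iInf_Prop_eq]
  refine ⟨fun _ S ↦ ?_, fun h ↦ ⟨fun J _ _ ↦ ?_⟩⟩
  · have : FinCategory (categoryFamily _ S) :=
      ((Arrow.finite_iff _).1 ((hasCardinalLT_aleph0_iff _).1 (hasCardinalLT _ S))).some
    infer_instance
  · obtain ⟨S, ⟨e⟩⟩ := exists_equivalence _ J ((hasCardinalLT_aleph0_iff _).2 inferInstance)
    exact preservesLimitsOfShape_of_equiv e F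

end CategoryTheory

theorem lex_inclusion_isRightAdjoint_general (C : Type) [SmallCategory C] :
    (ObjectProperty.ι (fun F : C ⥤ Type => PreservesFiniteLimits F)).IsRightAdjoint := by
  have := Cardinal.fact_isRegular_aleph0.{0}
  have : (ObjectProperty.preservesFiniteLimits :
      ObjectProperty (Cᵒᵖᵒᵖ ⥤ Type)).ι.IsRightAdjoint := by
    rw [ObjectProperty.preservesFiniteLimits_eq_iInf_preservesLimitsOfShape]
    exact Presheaf.isRightAdjoint_ι_iInf_preservesLimitsOfShape _ _
      (SmallCategoryCardinalLT.hasCardinalLT _)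
  refine ObjectProperty.isRightAdjoint_ι_of_equivalence (opOpEquivalence C).symm.congrLeft
    (Q := ObjectProperty.preservesFiniteLimits) ?_
  ext F
  exact preservesFiniteLimits_comp_equivalence_iff (opOpEquivalence C) F

/-- Barr embedding paper, setting: `L = Lex(C, Type)` is reflective in presheaves. -/
theorem lex_inclusion_isRightAdjoint (C : Type) [SmallCategory C] [HasFiniteLimits C] :
    (ObjectProperty.ι (fun F : C ⥤ Type => PreservesFiniteLimits F)).IsRightAdjoint :=
  lex_inclusion_isRightAdjoint_general C
end

section
/- Let C be a small category with finite limits and let L be the full subcategory of C ⥤ Type on the left exact presheaves. The functor Y : C ⥤ Lᵒᵖ sending an object c to the representable presheaf C(c, -) (regarded as an object of L) preserves finite limits, and it preserves all colimits that exist in C. -/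
open CategoryTheory CategoryTheory.Limits Opposite

/-- The category of left exact presheaves on `C`. -/
abbrev LexPSh (C : Type) [SmallCategory C] : Type 1 :=
  ObjectProperty.FullSubcategory (fun F : C ⥤ Type => PreservesFiniteLimits F)

/-- The representable presheaf `C(c, -)` as an object of `LexPSh C`. -/
def lexRepr (C : Type) [SmallCategory C] (c : C) : LexPSh C :=
  ⟨coyoneda.obj (op c), inferInstance⟩

/-- The Yoneda embedding `Y : C ⥤ Lᵒᵖ`, `c ↦ C(c, -)`. -/
def yonedaLex (C : Type) [SmallCategory C] : C ⥤ (LexPSh C)ᵒᵖ where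
  obj c := op (lexRepr C c)
  map {c d} f := (show lexRepr C d ⟶ lexRepr C c from ObjectProperty.homMk (coyoneda.map f.op)).op
  map_id c := by
    apply Quiver.Hom.unop_inj
    simp [lexRepr]
    rfl
  map_comp {c d e} f g := by
    apply Quiver.Hom.unop_inj
    simp [lexRepr]
    rfl

namespace yonedaLex

variable {C : Type} [SmallCategory C]

lemma comp_ι_op :
    yonedaLex C ⋙ (ObjectProperty.ι (fun F : C ⥤ Type => PreservesFiniteLimits F)).op =
      coyoneda.rightOp :=
  rfl

/-- The Yoneda lemma: `L(X, C(c, -)) ≅ X c`, naturally in `c`. -/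
noncomputable def compCoyonedaIso (X : ((LexPSh C)ᵒᵖ)ᵒᵖ) :
    yonedaLex C ⋙ coyoneda.obj X ≅ X.unop.unop.obj :=
  NatIso.ofComponents
    (fun c => Equiv.toIso
      (Quiver.Hom.opEquiv.symm.trans ((ObjectProperty.fullyFaithfulι _).homEquiv.trans
        (coyonedaEquiv (F := X.unop.unop.obj)))))
    (fun _ => by
      ext g
      exact (coyonedaEquiv_naturality g.unop.hom _).symm)

/-- Testing against every `X : L` through `Lᵒᵖ(-, X) ∘ Y ≅ X`, a limit cone is sent to a
limit cone because every `X` is left exact. -/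
lemma preservesLimit {J : Type} [SmallCategory J] [FinCategory J] (K : J ⥤ C) :
    PreservesLimit K (yonedaLex C) where
  preserves {c} hc := ⟨coyonedaJointlyReflectsLimits _ _ fun X => by
    have : PreservesLimit K (yonedaLex C ⋙ coyoneda.obj X) :=
      have := X.unop.unop.2.preservesFiniteLimits J
      preservesLimit_of_natIso K (compCoyonedaIso X).symm
    exact isLimitOfPreserves (yonedaLex C ⋙ coyoneda.obj X) hc⟩

lemma preservesFiniteLimits : PreservesFiniteLimits (yonedaLex C) where
  preservesFiniteLimits _ _ _ := ⟨preservesLimit _⟩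

/-- `coyoneda.rightOp` preserves colimits and the fully faithful `ι.op` reflects them. -/
lemma preservesColimit {J : Type} [SmallCategory J] (K : J ⥤ C) :
    PreservesColimit K (yonedaLex C) :=
  have : PreservesColimit K (yonedaLex C ⋙ (ObjectProperty.ι _).op) :=
    comp_ι_op (C := C) ▸ preservesColimit_rightOp K coyoneda
  preservesColimit_of_reflects_of_preserves (yonedaLex C) (ObjectProperty.ι _).op

end yonedaLex

theorem yonedaLex_preservesFiniteLimits_and_colimits_general
    (C : Type) [SmallCategory C] :
    PreservesFiniteLimits (yonedaLex C) ∧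
      ∀ (J : Type) [SmallCategory J] (K : J ⥤ C) [HasColimit K],
        PreservesColimit K (yonedaLex C) :=
  ⟨yonedaLex.preservesFiniteLimits, fun _ _ K _ => yonedaLex.preservesColimit K⟩

/-- Proposition 1(2): `Y : C ⥤ Lᵒᵖ` preserves finite limits and all colimits existing in `C`. -/
theorem yonedaLex_preservesFiniteLimits_and_colimits
    (C : Type) [SmallCategory C] [HasFiniteLimits C] :
    PreservesFiniteLimits (yonedaLex C) ∧
      ∀ (J : Type) [SmallCategory J] (K : J ⥤ C) [HasColimit K],
        PreservesColimit K (yonedaLex C) :=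
  yonedaLex_preservesFiniteLimits_and_colimits_general C
end

section
/- Let C be a small category with finite limits and let L be the full subcategory of C ⥤ Type on the left exact presheaves. For every filtered small category I, the colimit functor (I ⥤ L) ⥤ L preserves finite limits (filtered colimits commute with finite limits in L). -/
open CategoryTheory CategoryTheory.Limits

/-!
Limits in a functor category are computed pointwise, so the limit of a diagram `D` of functors
is `D.flip ⋙ lim`, which preserves any limit preserved by every `D.obj k`, since `lim` commutes
with limits. Likewise a filtered colimit is `D.flip ⋙ colim`, left exact because filtered
colimits commute with finite limits in `Type`. So `L` is closed in `C ⥤ Type` under finite limits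
and filtered colimits; its inclusion creates both, and exactness of filtered colimits passes
from `C ⥤ Type` to `L`.
-/

namespace CategoryTheory.ObjectProperty

section FunctorCategory

variable {J C : Type*} [Category* J] [Category* C]

instance isClosedUnderLimitsOfShape_preservesLimitsOfShape (K K' : Type*) [Category* K]
    [Category* K'] [HasLimitsOfShape K' C] [PreservesLimitsOfShape K (lim (J := K') (C := C))] :
    (preservesLimitsOfShape K : ObjectProperty (J ⥤ C)).IsClosedUnderLimitsOfShape K' where
  limitsOfShape_le := by
    rintro G ⟨h⟩
    have := h.prop_diag_obj
    have : PreservesLimitsOfShape K h.diag.flip := ⟨fun {F} ↦ ⟨fun {c} hc ↦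
      ⟨evaluationJointlyReflectsLimits _ (fun k' ↦ isLimitOfPreserves (h.diag.obj k') hc)⟩⟩⟩
    exact preservesLimitsOfShape_of_natIso
      (h.isLimit.conePointUniqueUpToIso (limit.isLimit _) ≪≫ limitIsoFlipCompLim h.diag).symm

instance isClosedUnderLimitsOfShape_preservesFiniteLimits (K' : Type*) [Category* K']
    [HasLimitsOfShape K' C] :
    (preservesFiniteLimits : ObjectProperty (J ⥤ C)).IsClosedUnderLimitsOfShape K' where
  limitsOfShape_le := by
    rintro G ⟨h⟩
    have := h.prop_diag_obj
    exact ⟨fun K _ _ ↦ (preservesLimitsOfShape K).prop_of_isLimit h.isLimit inferInstance⟩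

end FunctorCategory

lemma hasExactColimitsOfShape_fullSubcategory {D : Type*} [Category* D] (P : ObjectProperty D)
    (I : Type*) [Category* I] [HasColimitsOfShape I D] [HasExactColimitsOfShape I D]
    [HasFiniteLimits D] [P.IsClosedUnderColimitsOfShape I]
    [∀ (J : Type) [SmallCategory J] [FinCategory J], P.IsClosedUnderLimitsOfShape J] :
    HasExactColimitsOfShape I P.FullSubcategory where
  preservesFiniteLimits := ⟨fun J _ _ ↦
    have : PreservesLimitsOfShape J (colim (J := I) ⋙ P.ι) :=
      preservesLimitsOfShape_of_natIso (preservesColimitNatIso P.ι).symm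
    preservesLimitsOfShape_of_reflects_of_preserves (colim (J := I)) P.ι⟩

end CategoryTheory.ObjectProperty

theorem lex_filtered_colim_preservesFiniteLimits_general
    (C : Type) [SmallCategory C]
    (I : Type) [SmallCategory I] [IsFiltered I] :
    ∃ h : HasColimitsOfShape I (LexPSh C),
      PreservesFiniteLimits (@colim I _ (LexPSh C) _ h) :=
  have := ObjectProperty.hasExactColimitsOfShape_fullSubcategory
    (ObjectProperty.preservesFiniteLimits (J := C) (C := Type)) I
  ⟨inferInstance, HasExactColimitsOfShape.preservesFiniteLimits⟩

/-- Proposition 1(3): filtered colimits exist in `L` and commute with finite limits. -/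
theorem lex_filtered_colim_preservesFiniteLimits
    (C : Type) [SmallCategory C] [HasFiniteLimits C]
    (I : Type) [SmallCategory I] [IsFiltered I] :
    ∃ h : HasColimitsOfShape I (LexPSh C),
      PreservesFiniteLimits (@colim I _ (LexPSh C) _ h) :=
  lex_filtered_colim_preservesFiniteLimits_general C I
end

section
/- Let C be a small category with finite limits and let L be the full subcategory of C ⥤ Type on the left exact presheaves. Let I be a filtered small category, let F, G : I ⥤ L be diagrams and let m : F ⟶ G be a natural transformation each of whose components m_i is a regular monomorphism in L. Then the induced morphism colim F ⟶ colim G on filtered colimits is a regular monomorphism in L. -/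
/-!
Componentwise regular monos assemble to a regular mono in the functor category `I ⥤ L`: the
equalizing pairs `G i ⇉ Z i` extend to natural maps into the right Kan extension of `(Z i)` along
`Discrete I ⥤ I`, i.e. into `i ↦ ∏_{i ⟶ j} Z j`, and projecting to the component at `𝟙 i` shows
that `m` is their equalizer. Left exact presheaves are closed in `C ⥤ Type` under small limits and
under filtered colimits, which commute with finite limits there; so `colim : (I ⥤ L) ⥤ L`
preserves equalizers and sends the regular mono `m` to a regular mono.
-/

open CategoryTheory CategoryTheory.Limits

universe w v u

namespace CategoryTheory

section
variable {C : Type u} [Category.{v} C]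

noncomputable def IsRegularMono.isLimitForkOfComp {X Y W : C} (f : X ⟶ Y) [IsRegularMono f]
    {g h : Y ⟶ W} (w : f ≫ g = f ≫ h) (a : W ⟶ IsRegularMono.Z f)
    (hg : g ≫ a = IsRegularMono.left f) (hh : h ≫ a = IsRegularMono.right f) :
    IsLimit (Fork.ofι f w) :=
  Fork.IsLimit.mk' _ fun s => by
    have hs : s.ι ≫ IsRegularMono.left f = s.ι ≫ IsRegularMono.right f := by
      rw [← hg, ← hh, ← Category.assoc, s.condition, Category.assoc]
    exact ⟨IsRegularMono.lift f s.ι hs, IsRegularMono.fac f s.ι hs,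
      fun hl => (cancel_mono f).1 (hl.trans (IsRegularMono.fac f s.ι hs).symm)⟩

theorem Functor.map_isRegularMono {D : Type*} [Category* D] (F : C ⥤ D)
    [PreservesLimitsOfShape WalkingParallelPair F] {X Y : C} (f : X ⟶ Y) [IsRegularMono f] :
    IsRegularMono (F.map f) :=
  isRegularMono_of_regularMono
    (Fork.IsLimit.regularMono (isLimitForkMapOfIsLimit F _ (IsRegularMono.isLimit f)))

end

section
variable {D : Type u} [Category.{v} D] {I : Type w} [SmallCategory I] [HasLimitsOfSize.{w, w} D]

theorem NatTrans.isRegularMono_of_isRegularMono_app {F G : I ⥤ D} (m : F ⟶ G)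
    [∀ i, IsRegularMono (m.app i)] : IsRegularMono m := by
  let ι : Discrete I ⥤ I := Discrete.functor id
  let W := ι.rightKanExtension (Discrete.functor fun i => IsRegularMono.Z (m.app i))
  let ε := ι.rightKanExtensionCounit (Discrete.functor fun i => IsRegularMono.Z (m.app i))
  let p : G ⟶ W := W.liftOfIsRightKanExtension ε G
    (Discrete.natTrans fun i => IsRegularMono.left (m.app i.as))
  let q : G ⟶ W := W.liftOfIsRightKanExtension ε G
    (Discrete.natTrans fun i => IsRegularMono.right (m.app i.as))
  have hp (i : I) : p.app i ≫ ε.app ⟨i⟩ = IsRegularMono.left (m.app i) :=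
    congr_app (W.liftOfIsRightKanExtension_fac ε G _) ⟨i⟩
  have hq (i : I) : q.app i ≫ ε.app ⟨i⟩ = IsRegularMono.right (m.app i) :=
    congr_app (W.liftOfIsRightKanExtension_fac ε G _) ⟨i⟩
  have w : m ≫ p = m ≫ q := W.hom_ext_of_isRightKanExtension ε _ _ <| by
    ext ⟨i⟩
    simpa [ι, hp, hq] using IsRegularMono.w (m.app i)
  refine isRegularMono_of_regularMono (Fork.IsLimit.regularMono (c := Fork.ofι m w) ?_)
  refine evaluationJointlyReflectsLimits _ fun i => (isLimitMapConeForkEquiv _ _).symm ?_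
  exact IsRegularMono.isLimitForkOfComp (m.app i) _ (ε.app ⟨i⟩) (hp i) (hq i)

end

namespace ObjectProperty

instance {J D : Type*} [Category* J] [Category* D] (K : Type*) [Category* K]
    [HasLimitsOfShape K D] :
    (preservesFiniteLimits : ObjectProperty (J ⥤ D)).IsClosedUnderLimitsOfShape K where
  limitsOfShape_le := by
    rintro G ⟨h⟩
    have := h.prop_diag_obj
    have : PreservesFiniteLimits h.diag.flip := ⟨fun _ _ _ => ⟨fun {_} => ⟨fun {_} hc =>
      ⟨evaluationJointlyReflectsLimits _ fun k => isLimitOfPreserves (h.diag.obj k) hc⟩⟩⟩⟩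
    exact preservesFiniteLimits_of_natIso
      ((limitIsoFlipCompLim h.diag).symm ≪≫ (limit.isLimit _).conePointUniqueUpToIso h.isLimit)

end ObjectProperty

end CategoryTheory

namespace LexPSh

variable (C : Type) [SmallCategory C]

-- Instance search does not see `fun F => PreservesFiniteLimits F` as `preservesFiniteLimits`.
instance (K : Type) [SmallCategory K] :
    ObjectProperty.IsClosedUnderLimitsOfShape (fun F : C ⥤ Type => PreservesFiniteLimits F) K :=
  inferInstanceAs (ObjectProperty.preservesFiniteLimits.IsClosedUnderLimitsOfShape K)

instance (I : Type) [SmallCategory I] [IsFiltered I] :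
    ObjectProperty.IsClosedUnderColimitsOfShape (fun F : C ⥤ Type => PreservesFiniteLimits F) I :=
  inferInstanceAs (ObjectProperty.preservesFiniteLimits.IsClosedUnderColimitsOfShape I)

instance : HasLimits (LexPSh C) := ⟨fun _ _ => inferInstance⟩

instance : PreservesFiniteLimits (ObjectProperty.ι fun F : C ⥤ Type => PreservesFiniteLimits F) :=
  ⟨fun _ _ _ => inferInstance⟩

variable (I : Type) [SmallCategory I] [IsFiltered I]

instance : HasExactColimitsOfShape I (LexPSh C) :=
  HasExactColimitsOfShape.domain_of_functor I (ObjectProperty.ι _)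

end LexPSh

theorem lex_filtered_colimit_regularMono_general
    (C : Type) [SmallCategory C]
    (I : Type) [SmallCategory I] [IsFiltered I]
    (F G : I ⥤ LexPSh C) (m : F ⟶ G)
    (cF : Cocone F) (cG : Cocone G) (hF : IsColimit cF) (hG : IsColimit cG)
    (hm : ∀ i : I, Nonempty (RegularMono (m.app i))) :
    Nonempty (RegularMono (hF.map cG m)) := by
  have : ∀ i, IsRegularMono (m.app i) := fun i => ⟨hm i⟩
  have : IsRegularMono m := NatTrans.isRegularMono_of_isRegularMono_app m
  have : IsRegularMono (colim.map m) := colim.map_isRegularMono m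
  let e : Arrow.mk (colim.map m) ≅ Arrow.mk (hF.map cG m) :=
    Arrow.isoMk ((colimit.isColimit F).coconePointUniqueUpToIso hF)
      ((colimit.isColimit G).coconePointUniqueUpToIso hG)
      (colimit.hom_ext fun i => by simp)
  exact (((MorphismProperty.regularMono _).arrow_mk_iso_iff e).1 this).regularMono

/-- Proposition 1(3), second assertion: a filtered colimit of regular monos in `L`
is a regular mono. -/
theorem lex_filtered_colimit_regularMono
    (C : Type) [SmallCategory C] [HasFiniteLimits C]
    (I : Type) [SmallCategory I] [IsFiltered I]
    (F G : I ⥤ LexPSh C) (m : F ⟶ G)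
    (cF : Cocone F) (cG : Cocone G) (hF : IsColimit cF) (hG : IsColimit cG)
    (hm : ∀ i : I, Nonempty (RegularMono (m.app i))) :
    Nonempty (RegularMono (hF.map cG m)) :=
  lex_filtered_colimit_regularMono_general C I F G m cF cG hF hG hm
end

section
/- Let C be a small category with finite limits and let L be the full subcategory of C ⥤ Type on the left exact presheaves. For every object c of C, the hom functor L(C(c,-), -) : L ⥤ Type (i.e. the functor sending F to the set of natural transformations from the representable C(c,-) to F) preserves filtered colimits. -/
/-!
By Yoneda, maps out of `C(c, -)` are elements of the value at `c`, so the hom functor is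
evaluation at `c` restricted to `L`. Filtered colimits commute with finite limits in `Type`,
so `L` is closed under filtered colimits in `C ⥤ Type`; they are therefore computed pointwise
in `L`, and evaluation preserves them.
-/

open CategoryTheory CategoryTheory.Limits Opposite

universe u v w

section FilteredColimits

variable {C : Type u} [Category.{v} C] {I : Type w} [SmallCategory I] [IsFiltered I]

theorem preservesFiniteLimits_colimit (F : I ⥤ C ⥤ Type w)
    [∀ i, PreservesFiniteLimits (F.obj i)] : PreservesFiniteLimits (colimit F) :=
  have : PreservesFiniteLimits F.flip := preservesFiniteLimits_of_evaluation _ fun c =>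
    preservesFiniteLimits_of_natIso (flipCompEvaluation F c).symm
  preservesFiniteLimits_of_natIso (colimitIsoFlipCompColim F).symm

instance isClosedUnderColimitsOfShape_preservesFiniteLimits :
    ObjectProperty.IsClosedUnderColimitsOfShape
      (fun F : C ⥤ Type w => PreservesFiniteLimits F) I where
  colimitsOfShape_le _ := fun ⟨h⟩ =>
    have := h.prop_diag_obj
    have := preservesFiniteLimits_colimit h.diag
    preservesFiniteLimits_of_natIso (colimit.isoColimitCocone ⟨_, h.isColimit⟩)

end FilteredColimits

def CategoryTheory.Functor.FullyFaithful.coyonedaObjIso {D : Type u} {E : Type w}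
    [Category.{v} D] [Category.{v} E] {G : D ⥤ E} (hG : G.FullyFaithful) (X : D) :
    coyoneda.obj (op X) ≅ G ⋙ coyoneda.obj (op (G.obj X)) :=
  NatIso.ofComponents (fun _ => hG.homEquiv.toIso) fun f => by ext; simp

theorem lex_hom_from_representable_preserves_filtered_colimits_general
    (C : Type) [SmallCategory C] (c : C)
    (I : Type) [SmallCategory I] [IsFiltered I] :
    PreservesColimitsOfShape I (coyoneda.obj (op (lexRepr C c)) : LexPSh C ⥤ Type) :=
  preservesColimitsOfShape_of_natIso
    ((ObjectProperty.fullyFaithfulι _).coyonedaObjIso (lexRepr C c) ≪≫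
      Functor.isoWhiskerLeft (ObjectProperty.ι _) (curriedCoyonedaLemma.app c)).symm

/-- Proposition 1(4): for a representable presheaf `A = C(c,-)`, the hom functor
`L(A, -) : L ⥤ Type` preserves filtered colimits. -/
theorem lex_hom_from_representable_preserves_filtered_colimits
    (C : Type) [SmallCategory C] [HasFiniteLimits C] (c : C)
    (I : Type) [SmallCategory I] [IsFiltered I] :
    PreservesColimitsOfShape I (coyoneda.obj (op (lexRepr C c)) : LexPSh C ⥤ Type) :=
  lex_hom_from_representable_preserves_filtered_colimits_general C c I
end

section
/- Let C be a small regular category and let L be the full subcategory of C ⥤ Type on the left exact presheaves. A left exact presheaf P : C ⥤ Type preserves regular epimorphisms if and only if for every regular monomorphism a : A ⟶ B in L between representable presheaves, the precomposition map a* : L(B, P) ⟶ L(A, P) on hom-sets is surjective. -/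
open CategoryTheory CategoryTheory.Limits Opposite

/-- An object of `LexPSh C` is representable if it is isomorphic to some `C(c, -)`. -/
def IsLexRepresentable {C : Type} [SmallCategory C] (A : LexPSh C) : Prop :=
  ∃ c : C, Nonempty (A ≅ lexRepr C c)

/-- A presheaf preserves regular epimorphisms. -/
def PreservesRegularEpis {C : Type} [SmallCategory C] (P : C ⥤ Type) : Prop :=
  ∀ {X Y : C} (f : X ⟶ Y), Nonempty (RegularEpi f) → Nonempty (RegularEpi (P.map f))

/-!
By Yoneda, precomposition with `C(f, -) : C(d, -) ⟶ C(c, -)` on `L(-, P)` is `P(f) : P c → P d`,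
and the regular epis of `Type` are the surjections; so everything reduces to: `f` is a regular epi
in `C` iff `C(f, -)` is a regular mono in `L`. Yoneda turns coequalizers into equalizers, and `L`
is closed under limits in `C ⥤ Type`. Conversely, let `C(f, -)` be the equalizer of
`u, v : C(c, -) ⟶ Z` with `Z` left exact, and let `g` coequalize the kernel pair of `f`. Since `Z`
preserves that pullback, the elements `u, v ∈ Z c`, having equal images in `Z d`, come from one
element of `Z (c ×_d c)`; hence `C(g, -)` also equalizes `u, v`, so it factors through `C(f, -)`,
i.e. `g` factors through `f`. Thus `f` is the coequalizer of its kernel pair.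
-/

namespace CategoryTheory

noncomputable def RegularMono.map {C D : Type*} [Category C] [Category D] {X Y : C} {f : X ⟶ Y}
    (hf : RegularMono f) (F : C ⥤ D) [PreservesLimitsOfShape WalkingParallelPair F] :
    RegularMono (F.map f) where
  Z := F.obj hf.Z
  left := F.map hf.left
  right := F.map hf.right
  w := by simp only [← F.map_comp, hf.w]
  isLimit := isLimitForkMapOfIsLimit F hf.w hf.isLimit

lemma Limits.Types.nonempty_regularEpi_iff_surjective {X Y : Type} (f : X ⟶ Y) :
    Nonempty (RegularEpi f) ↔ Function.Surjective f := by
  rw [← epi_iff_surjective]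
  exact ⟨fun ⟨hf⟩ => hf.epi, fun _ => ⟨regularEpiOfEpi f⟩⟩

lemma Functor.map_eq_map_of_coequalizes_kernelPair {C : Type*} [Category C] [HasPullbacks C]
    (F : C ⥤ Type) {c d W : C} {f : c ⟶ d} [PreservesLimit (cospan f f) F] {g : c ⟶ W}
    (hg : pullback.fst f f ≫ g = pullback.snd f f ≫ g) {x y : F.obj c}
    (hxy : F.map f x = F.map f y) : F.map g x = F.map g y := by
  obtain ⟨z, rfl, rfl⟩ :=
    Types.exists_of_isPullback ((IsPullback.of_hasPullback f f).map F) x y hxy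
  simp only [← Functor.map_comp_apply, hg]

lemma surjective_precomp_of_arrowIso {D : Type*} [Category D] {A B A' B' : D}
    {a : A ⟶ B} {a' : A' ⟶ B'} (e : Arrow.mk a ≅ Arrow.mk a') {P : D}
    (h : Function.Surjective (fun g : B' ⟶ P => a' ≫ g)) :
    Function.Surjective (fun g : B ⟶ P => a ≫ g) := by
  intro k
  obtain ⟨g, hg⟩ := h (e.inv.left ≫ k)
  refine ⟨e.hom.right ≫ g, ?_⟩
  have hw : a ≫ e.hom.right = e.hom.left ≫ a' := e.hom.w.symm
  simp only at hg ⊢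
  rw [reassoc_of% hw, hg, ← Arrow.comp_left_assoc, e.hom_inv_id, Arrow.id_left,
    Category.id_comp]

end CategoryTheory

lemma preservesRegularEpis_iff_surjective_map {C : Type} [SmallCategory C] (P : C ⥤ Type) :
    PreservesRegularEpis P ↔
      ∀ {X Y : C} (f : X ⟶ Y), Nonempty (RegularEpi f) → Function.Surjective (P.map f) := by
  simp only [PreservesRegularEpis, Types.nonempty_regularEpi_iff_surjective]

section LexCoyoneda

variable {C : Type} [SmallCategory C]

variable (C) in
def lexCoyoneda : Cᵒᵖ ⥤ LexPSh C :=
  ObjectProperty.lift _ coyoneda fun _ => inferInstance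

instance : (lexCoyoneda C).Full := inferInstanceAs (ObjectProperty.lift _ _ _).Full

instance : (lexCoyoneda C).Faithful := inferInstanceAs (ObjectProperty.lift _ _ _).Faithful

instance : PreservesLimits (lexCoyoneda C) where
  preservesLimitsOfShape := ⟨fun {K} =>
    have : PreservesLimit K (lexCoyoneda C ⋙ ObjectProperty.ι _) :=
      preservesLimit_of_natIso K (ObjectProperty.liftCompιIso _ _ _).symm
    preservesLimit_of_reflects_of_preserves _ (ObjectProperty.ι _)⟩

def lexCoyonedaHomEquiv (c : C) (P : LexPSh C) :
    ((lexCoyoneda C).obj (op c) ⟶ P) ≃ P.obj.obj c :=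
  (ObjectProperty.fullyFaithfulι _).homEquiv.trans coyonedaEquiv

lemma lexCoyonedaHomEquiv_map_comp {c d : C} (f : c ⟶ d) {P : LexPSh C}
    (g : (lexCoyoneda C).obj (op c) ⟶ P) :
    lexCoyonedaHomEquiv d P ((lexCoyoneda C).map f.op ≫ g) =
      P.obj.map f (lexCoyonedaHomEquiv c P g) :=
  (coyonedaEquiv_naturality _ _).symm

lemma surjective_precomp_lexCoyoneda_map_iff {c d : C} (f : c ⟶ d) (P : LexPSh C) :
    Function.Surjective
        (fun g : (lexCoyoneda C).obj (op c) ⟶ P => (lexCoyoneda C).map f.op ≫ g) ↔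
      Function.Surjective (P.obj.map f) := by
  have : (fun g => (lexCoyoneda C).map f.op ≫ g) =
      (lexCoyonedaHomEquiv d P).symm ∘ P.obj.map f ∘ lexCoyonedaHomEquiv c P := by
    funext g
    simp [← lexCoyonedaHomEquiv_map_comp]
  rw [this, Equiv.comp_surjective, Equiv.surjective_comp]

lemma lexCoyoneda_map_comp_eq_of_kernelPair [HasPullbacks C] {c d W : C} {f : c ⟶ d}
    {g : c ⟶ W} (hg : pullback.fst f f ≫ g = pullback.snd f f ≫ g) {Z : LexPSh C}
    {u v : (lexCoyoneda C).obj (op c) ⟶ Z}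
    (huv : (lexCoyoneda C).map f.op ≫ u = (lexCoyoneda C).map f.op ≫ v) :
    (lexCoyoneda C).map g.op ≫ u = (lexCoyoneda C).map g.op ≫ v := by
  have := Z.property
  apply (lexCoyonedaHomEquiv W Z).injective
  have huv' := congrArg (lexCoyonedaHomEquiv d Z) huv
  rw [lexCoyonedaHomEquiv_map_comp, lexCoyonedaHomEquiv_map_comp] at huv' ⊢
  exact Z.obj.map_eq_map_of_coequalizes_kernelPair hg huv'

lemma isRegularEpi_of_regularMono_lexCoyoneda_map [HasPullbacks C] {c d : C} (f : c ⟶ d)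
    (hf : RegularMono ((lexCoyoneda C).map f.op)) : IsRegularEpi f := by
  have : Mono f.op := (lexCoyoneda C).mono_of_mono_map hf.mono
  have : Epi f := unop_epi_of_mono f.op
  refine IsRegularEpi.of_epi_of_exists fun W g hg => ?_
  obtain ⟨s, hs⟩ := hf.lift' ((lexCoyoneda C).map g.op)
    (lexCoyoneda_map_comp_eq_of_kernelPair hg hf.w)
  refine ⟨((lexCoyoneda C).preimage s).unop,
    Quiver.Hom.op_inj ((lexCoyoneda C).map_injective ?_)⟩
  rw [op_comp, Functor.map_comp, Quiver.Hom.op_unop, Functor.map_preimage, hs]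

lemma exists_arrowIso_lexCoyoneda_map {A B : LexPSh C} (a : A ⟶ B) (hA : IsLexRepresentable A)
    (hB : IsLexRepresentable B) :
    ∃ (c d : C) (f : d ⟶ c), Nonempty (Arrow.mk a ≅ Arrow.mk ((lexCoyoneda C).map f.op)) := by
  obtain ⟨c, ⟨φ⟩⟩ := hA
  obtain ⟨d, ⟨ψ⟩⟩ := hB
  refine ⟨c, d, ((lexCoyoneda C).preimage (φ.inv ≫ a ≫ ψ.hom)).unop,
    ⟨Arrow.isoMk φ ψ ?_⟩⟩
  simp only [Arrow.mk_hom, Quiver.Hom.op_unop, Functor.map_preimage]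
  exact φ.hom_inv_id_assoc _

end LexCoyoneda

theorem lex_preservesRegularEpis_iff_surjective_precomp_general
    (C : Type) [SmallCategory C] [HasFiniteLimits C]
    (P : LexPSh C) :
    PreservesRegularEpis P.obj ↔
      ∀ (A B : LexPSh C) (a : A ⟶ B), IsLexRepresentable A → IsLexRepresentable B →
        Nonempty (RegularMono a) →
          Function.Surjective (fun g : B ⟶ P => a ≫ g) := by
  rw [preservesRegularEpis_iff_surjective_map]
  constructor
  · rintro hP A B a hA hB ⟨ha⟩
    obtain ⟨c, d, f, ⟨e⟩⟩ := exists_arrowIso_lexCoyoneda_map a hA hB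
    refine surjective_precomp_of_arrowIso e ?_
    rw [surjective_precomp_lexCoyoneda_map_iff]
    exact hP f (isRegularEpi_of_regularMono_lexCoyoneda_map f (ha.ofArrowIso e)).regularEpi
  · rintro H X Y f ⟨hf⟩
    exact (surjective_precomp_lexCoyoneda_map_iff f P).1
      (H _ _ _ ⟨Y, ⟨Iso.refl _⟩⟩ ⟨X, ⟨Iso.refl _⟩⟩ ⟨hf.op.map (lexCoyoneda C)⟩)

/-- Key observation in the proof of Proposition 5: a left exact presheaf `P` preserves
regular epis iff for every regular mono `a : A ⟶ B` between representables in `L`,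
precomposition `a* : L(B, P) ⟶ L(A, P)` is surjective. -/
theorem lex_preservesRegularEpis_iff_surjective_precomp
    (C : Type) [SmallCategory C] [HasFiniteLimits C]
    (hcoeq : ∀ {X Y : C} (f : X ⟶ Y),
      HasCoequalizer (pullback.fst f f) (pullback.snd f f))
    (hstab : ∀ {X Y Z : C} (f : X ⟶ Y) (g : Z ⟶ Y),
      Nonempty (RegularEpi f) → Nonempty (RegularEpi (pullback.snd f g)))
    (P : LexPSh C) :
    PreservesRegularEpis P.obj ↔
      ∀ (A B : LexPSh C) (a : A ⟶ B), IsLexRepresentable A → IsLexRepresentable B →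
        Nonempty (RegularMono a) →
          Function.Surjective (fun g : B ⟶ P => a ≫ g) :=
  lex_preservesRegularEpis_iff_surjective_precomp_general C P
end

section
/- Let C be a small regular category, let L be the full subcategory of C ⥤ Type on the left exact presheaves, and let T be any full subcategory of L all of whose objects are regular functors. Then the evaluation functor E : C ⥤ (T ⥤ Type), sending an object c of C to the functor T ↦ T(c), preserves finite limits and regular epimorphisms (i.e. E is a regular functor). -/
open CategoryTheory CategoryTheory.Limits

/-- The evaluation functor `E : C ⥤ (T ⥤ Type)`, `c ↦ (T ↦ T(c))`, for a full
subcategory `T` of `L` cut out by a predicate `pred`. -/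
def evalIntoSub (C : Type) [SmallCategory C] (pred : LexPSh C → Prop) :
    C ⥤ (ObjectProperty.FullSubcategory pred ⥤ Type) :=
  evaluation C Type ⋙ (Functor.whiskeringLeft (ObjectProperty.FullSubcategory pred) (C ⥤ Type) Type).obj
    (ObjectProperty.ι pred ⋙ ObjectProperty.ι _)

/-!
Limits and colimits in a functor category `𝒯 ⥤ Type` are computed pointwise, and evaluating `E`
at an object `T` of `𝒯` gives back the presheaf `T` itself. So `E` is left exact because every `T`
is, and `E f` is an epimorphism as soon as every `T f` is one; in a functor category into `Type`
every epimorphism is regular.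
-/

def evalIntoSubCompEvaluationIso (C : Type) [SmallCategory C] (pred : LexPSh C → Prop)
    (T : ObjectProperty.FullSubcategory pred) :
    evalIntoSub C pred ⋙ (evaluation (ObjectProperty.FullSubcategory pred) Type).obj T ≅
      T.obj.obj :=
  NatIso.ofComponents (fun _ => Iso.refl _) (by intros; rfl)

theorem preservesFiniteLimits_evalIntoSub (C : Type) [SmallCategory C] (pred : LexPSh C → Prop) :
    PreservesFiniteLimits (evalIntoSub C pred) :=
  preservesFiniteLimits_of_evaluation _ fun T =>
    have : PreservesFiniteLimits T.obj.obj := T.obj.property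
    preservesFiniteLimits_of_natIso (evalIntoSubCompEvaluationIso C pred T).symm

theorem evalIntoSub_regular_general
    (C : Type) [SmallCategory C]
    (pred : LexPSh C → Prop)
    (hpred : ∀ F : LexPSh C, pred F → PreservesRegularEpis F.obj) :
    PreservesFiniteLimits (evalIntoSub C pred) ∧
      ∀ {X Y : C} (f : X ⟶ Y), Nonempty (RegularEpi f) →
        Nonempty (RegularEpi ((evalIntoSub C pred).map f)) := by
  refine ⟨preservesFiniteLimits_evalIntoSub C pred, fun f hf => ?_⟩
  have (T : ObjectProperty.FullSubcategory pred) : Epi (((evalIntoSub C pred).map f).app T) :=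
    (hpred T.obj T.property f hf).some.epi
  have : Epi ((evalIntoSub C pred).map f) := NatTrans.epi_of_epi_app _
  exact ⟨regularEpiOfEpi _⟩

/-- If every object of the full subcategory `T ⊆ L` is a regular functor, then the
evaluation functor `E : C ⥤ (T ⥤ Type)` preserves finite limits and regular epis. -/
theorem evalIntoSub_regular
    (C : Type) [SmallCategory C] [HasFiniteLimits C]
    (hcoeq : ∀ {X Y : C} (f : X ⟶ Y),
      HasCoequalizer (pullback.fst f f) (pullback.snd f f))
    (hstab : ∀ {X Y Z : C} (f : X ⟶ Y) (g : Z ⟶ Y),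
      Nonempty (RegularEpi f) → Nonempty (RegularEpi (pullback.snd f g)))
    (pred : LexPSh C → Prop)
    (hpred : ∀ F : LexPSh C, pred F → PreservesRegularEpis F.obj) :
    PreservesFiniteLimits (evalIntoSub C pred) ∧
      ∀ {X Y : C} (f : X ⟶ Y), Nonempty (RegularEpi f) →
        Nonempty (RegularEpi ((evalIntoSub C pred).map f)) :=
  evalIntoSub_regular_general C pred hpred
end
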